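/- In the graph H obtained by gluing a CFI gadget X_3 with external pairs (P_1, P_2, P_0) and a CFI gadget X_{k+2} with external pairs (P_1, P_2, P_3, …, P_{k+2}) along the shared pairs P_1, P_2: a color-preserving automorphism of H flips the pair P_0 if and only if it flips an odd number of the pairs P_3, …, P_{k+2}. -/

import Mathlib

open scoped Classical

/-- Even-weight binary strings of length `k`. -/
def EvenStr (k : ℕ) := {s : Fin k → Bool // Even ((Finset.univ.filter fun i => s i = true).card)}

instance (k : ℕ) : Fintype (EvenStr k) := by unfold EvenStr; infer_instance

/-- Vertices of the CFI gadget `X_k`: external pairs `P_i = {(i, false), (i, true)}`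
and middle vertices given by even-weight strings. -/
def CFIV (k : ℕ) := (Fin k × Bool) ⊕ EvenStr k

instance (k : ℕ) : Fintype (CFIV k) := by unfold CFIV; infer_instance

def CFIhalf (k : ℕ) : CFIV k → CFIV k → Prop
  | .inl (i, β), .inr s => s.1 i = β
  | _, _ => False

/-- The CFI gadget `X_k`: the middle vertex `s` is adjacent to `a_i = (i, false)`
if `s i = false` and to `b_i = (i, true)` if `s i = true`. -/
def CFI (k : ℕ) : SimpleGraph (CFIV k) where
  Adj x y := CFIhalf k x y ∨ CFIhalf k y x
  symm := ⟨fun x y h => h.symm⟩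
  loopless := ⟨fun x h => by rcases h with h | h <;> rcases x with ⟨i, β⟩ | s <;> exact h⟩

/-- Colors of `X_k`: pair `P_i` gets color `i`; all middle vertices get color `k`. -/
def CFIcolor (k : ℕ) : CFIV k → ℕ
  | .inl (i, _) => i
  | .inr _ => k

/-- `σ` flips the external pair `P_i`. -/
def CFIFlips (k : ℕ) (σ : CFIV k ≃ CFIV k) (i : Fin k) : Prop :=
  σ (.inl (i, false)) = .inl (i, true)
/-- Vertices of the gluing `H` of `X₃` (pairs `P₁, P₂, P₀`) and `X_{k+2}`
(pairs `P₁, P₂, P₃, …, P_{k+2}`) along the shared pairs `P₁, P₂`.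
Pairs are indexed by `Fin (k+3)` (index `i` is the pair `P_i`); the two middle
vertex sets `F` and `F'` are the two kinds of even-weight strings. -/
def GlueV (k : ℕ) := (Fin (k + 3) × Bool) ⊕ (EvenStr 3 ⊕ EvenStr (k + 2))

instance (k : ℕ) : Fintype (GlueV k) := by unfold GlueV; infer_instance

/-- Adjacency (one direction): the `X₃` middle vertex `s` uses pairs `P₁, P₂, P₀`
(in this order), the `X_{k+2}` middle vertex `t` uses pairs `P₁, …, P_{k+2}`. -/
def glueHalf (k : ℕ) : GlueV k → GlueV k → Prop
  | .inl (p, β), .inr (.inl s) =>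
      ∃ j : Fin 3, (![1, 2, 0] : Fin 3 → Fin (k + 3)) j = p ∧ s.1 j = β
  | .inl (p, β), .inr (.inr t) =>
      ∃ j : Fin (k + 2), (⟨j.1 + 1, Nat.succ_lt_succ j.isLt⟩ : Fin (k + 3)) = p ∧ t.1 j = β
  | _, _ => False

/-- The glued graph `H` of the CFI gadgets `X₃` and `X_{k+2}`. -/
def Glue (k : ℕ) : SimpleGraph (GlueV k) where
  Adj x y := glueHalf k x y ∨ glueHalf k y x
  symm := ⟨fun x y h => h.symm⟩
  loopless := ⟨fun x h => by rcases h with h | h <;> rcases x with ⟨p, β⟩ | s | t <;> exact h⟩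

/-- Colors: pair `P_p` gets color `p`; `F` gets color `k+3`; `F'` gets color `k+4`. -/
def glueColor (k : ℕ) : GlueV k → ℕ
  | .inl (p, _) => p
  | .inr (.inl _) => k + 3
  | .inr (.inr _) => k + 4

/-- `σ` flips the pair `P_p`. -/
def glueFlips (k : ℕ) (σ : GlueV k ≃ GlueV k) (p : Fin (k + 3)) : Prop :=
  σ (.inl (p, false)) = .inl (p, true)


/-!
Colors force a color-preserving automorphism `σ` of `H` to map every pair `P_p` onto itself
and each gadget's middle vertices onto that gadget's middle vertices. Adjacency then sends the
all-`false` middle vertex of a gadget to the middle vertex whose string records which of the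
gadget's pairs `σ` flips, and since that string has even weight, `σ` flips an even number of
`P₁, P₂, P₀` and an even number of `P₁, …, P_{k+2}`. Adding the two parities cancels `P₁, P₂`.
-/

open Finset

theorem apply_zero_iff_odd_card_filter_three_le {k : ℕ} (P : Fin (k + 3) → Prop)
    (hleft : Even #{j : Fin 3 | P (![1, 2, 0] j)})
    (hright : Even #{j : Fin (k + 2) | P j.succ}) :
    P 0 ↔ Odd #{p : Fin (k + 3) | 3 ≤ (p : ℕ) ∧ P p} := by
  have hleft_card : #{j : Fin 3 | P (![1, 2, 0] j)} =
      (if P 1 then 1 else 0) + (if P 2 then 1 else 0) + (if P 0 then 1 else 0) := by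
    simp [Fin.card_filter_univ_succ', add_assoc, apply_ite Finset.card]
    -- the two sides differ only in their `Decidable` instances
    rfl
  have hright_card : #{j : Fin (k + 2) | P j.succ} =
      (if P 1 then 1 else 0) + (if P 2 then 1 else 0) + #{j : Fin k | P j.succ.succ.succ} := by
    simp [Fin.card_filter_univ_succ', add_assoc]
    rfl
  have htail_card :
      #{p : Fin (k + 3) | 3 ≤ (p : ℕ) ∧ P p} = #{j : Fin k | P j.succ.succ.succ} := by
    simp [Fin.card_filter_univ_succ']
  rw [hleft_card, Nat.even_iff] at hleft
  rw [hright_card, Nat.even_iff] at hright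
  rw [htail_card, Nat.odd_iff]
  by_cases h0 : P 0 <;>
    simp only [h0, if_true, if_false, true_iff, false_iff] at hleft ⊢ <;> omega

theorem injective_vec_one_two_zero (k : ℕ) :
    Function.Injective (![1, 2, 0] : Fin 3 → Fin (k + 3)) := by
  intro i j h
  fin_cases i <;> fin_cases j <;> simp_all [Fin.ext_iff, Nat.mod_eq_of_lt]

def EvenStr.zero (n : ℕ) : EvenStr n := ⟨fun _ => false, by simp⟩

namespace Glue

variable {k : ℕ} {σ : GlueV k ≃ GlueV k}

theorem exists_apply_inl (hcol : ∀ v, glueColor k (σ v) = glueColor k v) (p : Fin (k + 3))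
    (β : Bool) : ∃ γ, σ (.inl (p, β)) = .inl (p, γ) := by
  have h := hcol (.inl (p, β))
  have := p.isLt
  rcases hσ : σ (.inl (p, β)) with ⟨q, γ⟩ | s | t <;> simp only [hσ, glueColor] at h
  · exact ⟨γ, by rw [Fin.ext h]⟩
  all_goals omega

theorem apply_inl_false (hcol : ∀ v, glueColor k (σ v) = glueColor k v) (p : Fin (k + 3)) :
    σ (.inl (p, false)) = .inl (p, decide (glueFlips k σ p)) := by
  obtain ⟨γ, hγ⟩ := exists_apply_inl hcol p false
  have hflip : glueFlips k σ p ↔ γ = true := by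
    rw [glueFlips, hγ]
    exact ⟨fun h => congrArg Prod.snd (Sum.inl_injective h), fun h => h ▸ rfl⟩
  rw [hγ, Bool.decide_congr hflip, Bool.decide_eq_true]

theorem exists_apply_inr_inl (hcol : ∀ v, glueColor k (σ v) = glueColor k v) (s : EvenStr 3) :
    ∃ s', σ (.inr (.inl s)) = .inr (.inl s') := by
  have h := hcol (.inr (.inl s))
  rcases hσ : σ (.inr (.inl s)) with ⟨q, γ⟩ | s' | t <;> simp only [hσ, glueColor] at h
  · have := q.isLt; omega
  · exact ⟨s', rfl⟩
  · omega

theorem exists_apply_inr_inr (hcol : ∀ v, glueColor k (σ v) = glueColor k v)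
    (t : EvenStr (k + 2)) : ∃ t', σ (.inr (.inr t)) = .inr (.inr t') := by
  have h := hcol (.inr (.inr t))
  rcases hσ : σ (.inr (.inr t)) with ⟨q, γ⟩ | s | t' <;> simp only [hσ, glueColor] at h
  · have := q.isLt; omega
  · omega
  · exact ⟨t', rfl⟩

theorem even_card_flips_left_gadget
    (hadj : ∀ x y, (Glue k).Adj x y ↔ (Glue k).Adj (σ x) (σ y))
    (hcol : ∀ v, glueColor k (σ v) = glueColor k v) :
    Even #{j : Fin 3 | glueFlips k σ (![1, 2, 0] j)} := by
  obtain ⟨s, hs⟩ := exists_apply_inr_inl hcol (EvenStr.zero 3)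
  have hbits (j : Fin 3) : s.1 j = decide (glueFlips k σ (![1, 2, 0] j)) := by
    have h : (Glue k).Adj (.inl (![1, 2, 0] j, false)) (.inr (.inl (EvenStr.zero 3))) :=
      .inl ⟨j, rfl, rfl⟩
    replace h := (hadj _ _).1 h
    rw [apply_inl_false hcol, hs] at h
    obtain ⟨j', hj', hbit⟩ | h := h
    · rwa [injective_vec_one_two_zero k hj'] at hbit
    · exact h.elim
  simpa [hbits] using s.2

theorem even_card_flips_right_gadget
    (hadj : ∀ x y, (Glue k).Adj x y ↔ (Glue k).Adj (σ x) (σ y))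
    (hcol : ∀ v, glueColor k (σ v) = glueColor k v) :
    Even #{j : Fin (k + 2) | glueFlips k σ j.succ} := by
  obtain ⟨t, ht⟩ := exists_apply_inr_inr hcol (EvenStr.zero (k + 2))
  have hbits (j : Fin (k + 2)) : t.1 j = decide (glueFlips k σ j.succ) := by
    have h : (Glue k).Adj (.inl (j.succ, false)) (.inr (.inr (EvenStr.zero (k + 2)))) :=
      .inl ⟨j, rfl, rfl⟩
    replace h := (hadj _ _).1 h
    rw [apply_inl_false hcol, ht] at h
    obtain ⟨j', hj', hbit⟩ | h := h
    · rwa [Fin.succ_injective _ hj'] at hbit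
    · exact h.elim
  simpa [hbits] using t.2

end Glue

theorem glue_flip_parity_general (k : ℕ) (σ : GlueV k ≃ GlueV k)
    (hadj : ∀ x y, (Glue k).Adj x y ↔ (Glue k).Adj (σ x) (σ y))
    (hcol : ∀ v, glueColor k (σ v) = glueColor k v) :
    (glueFlips k σ 0 ↔
      Odd ((Finset.univ.filter fun p : Fin (k + 3) =>
        3 ≤ (p : ℕ) ∧ glueFlips k σ p).card)) :=
  apply_zero_iff_odd_card_filter_three_le (glueFlips k σ)
    (Glue.even_card_flips_left_gadget hadj hcol) (Glue.even_card_flips_right_gadget hadj hcol)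

/-- In the gluing `H` of `X₃` and `X_{k+2}` along the shared pairs `P₁, P₂`, a
color-preserving automorphism flips the pair `P₀` if and only if it flips an odd
number of the pairs `P₃, …, P_{k+2}`. -/
theorem glue_flip_parity (k : ℕ) (hk : 1 ≤ k) (σ : GlueV k ≃ GlueV k)
    (hadj : ∀ x y, (Glue k).Adj x y ↔ (Glue k).Adj (σ x) (σ y))
    (hcol : ∀ v, glueColor k (σ v) = glueColor k v) :
    (glueFlips k σ 0 ↔
      Odd ((Finset.univ.filter fun p : Fin (k + 3) =>
        3 ≤ (p : ℕ) ∧ glueFlips k σ p).card)) :=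
  glue_flip_parity_general k σ hadj hcol
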